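/- arXiv:0811.4003 — 2 statements merged into one kernel-verified Lean document; each statement's English description precedes it below -/
import Mathlib

section
/- Let n ≥ 1, let U be a 2^n × 2^n unitary, let 0 < α ≤ 1, let ρ_DQC1 = 2^{−(n+1)} · [[I_{2^n}, α U†],[α U, I_{2^n}]], and suppose τ = Tr(U)/2^n ≠ 0. For θ ∈ ℝ set χ = π/2 − arg(τ) and U_A = [[cos θ, e^{iχ} sin θ],[−e^{−iχ} sin θ, cos θ]]. Then U_A commutes with the reduced state Tr_B(ρ_DQC1) = (1/2)[[1, α·conj(τ)],[α τ, 1]], and with ρ_f = (U_A ⊗ I_{2^n}) ρ_DQC1 (U_A ⊗ I_{2^n})†, the LNU shift satisfies Tr(ρ_DQC1²) − Tr(ρ_DQC1 · ρ_f) = (α² sin²θ / 2^{n+1}) · (1 − Re((conj(τ)/|τ|)² · Tr(U²))/2^n). -/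
open Matrix Kronecker

/-- The DQC1 state on n+1 qubits, indexed by Fin 2 × Fin 2ⁿ (control qubit first):
ρ = 2^{-(n+1)} · [[I, αUᴴ],[αU, I]]. -/
noncomputable def dqc1State (n : ℕ) (α : ℝ) (U : Matrix (Fin (2 ^ n)) (Fin (2 ^ n)) ℂ) :
    Matrix (Fin 2 × Fin (2 ^ n)) (Fin 2 × Fin (2 ^ n)) ℂ :=
  Matrix.of fun p q =>
    ((2 : ℂ) ^ (n + 1))⁻¹ *
      (![![(1 : Matrix (Fin (2 ^ n)) (Fin (2 ^ n)) ℂ), (α : ℂ) • Uᴴ],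
         ![(α : ℂ) • U, (1 : Matrix (Fin (2 ^ n)) (Fin (2 ^ n)) ℂ)]] p.1 q.1) p.2 q.2

/-- Partial trace over the second tensor factor. -/
noncomputable def ptraceB {M N : ℕ} (ρ : Matrix (Fin M × Fin N) (Fin M × Fin N) ℂ) :
    Matrix (Fin M) (Fin M) ℂ :=
  Matrix.of fun i j => ∑ k, ρ (i, k) (j, k)

/-
Write `ρ = 2^{-(n+1)} (1 + α X)` with `X = [[0, U†], [U, 0]]`. Conjugation by `V = U_A ⊗ I` fixes
the identity part and preserves traces, so the LNU shift is `4^{-(n+1)} α² (Tr X² - Tr (X V X V†))`.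
Expanding blockwise, `Tr X² = 2^{n+1}` and
`Tr (X V X V†) = 2^{n+1} cos² θ - 2 sin² θ Re (e^{2iχ} Tr U²)`, and `e^{iχ} = i conj τ / |τ|`
turns `e^{2iχ}` into `-(conj τ / |τ|)²`. The same identity makes `e^{iχ} τ = i |τ|` purely
imaginary, which is exactly the condition for `U_A` to commute with the reduced state.
-/

open ComplexConjugate

lemma Complex.exp_pi_div_two_sub_arg_mul_I {τ : ℂ} (hτ : τ ≠ 0) :
    Complex.exp (((Real.pi / 2 - Complex.arg τ : ℝ) : ℂ) * Complex.I) =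
      Complex.I * (conj τ / ‖τ‖) := by
  have hnorm : (‖τ‖ : ℂ) ≠ 0 := by simpa using hτ
  have hpolar := congrArg conj (Complex.norm_mul_exp_arg_mul_I τ)
  rw [map_mul, Complex.conj_ofReal, ← Complex.exp_conj] at hpolar
  rw [Complex.ofReal_sub, sub_mul, Complex.exp_sub, ← hpolar, Complex.ofReal_div,
    Complex.ofReal_ofNat, Complex.exp_pi_div_two_mul_I]
  field_simp
  simp [map_mul, Complex.conj_ofReal, ← Complex.exp_add]

lemma Complex.exp_neg_ofReal_mul_I (x : ℝ) :
    Complex.exp (-(x * Complex.I)) = conj (Complex.exp (x * Complex.I)) := by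
  rw [← Complex.exp_conj, map_mul, Complex.conj_ofReal, Complex.conj_I, mul_neg]

section OffDiagBlocks

variable {R : Type*} [CommRing R] {m : Type*} [Fintype m] [DecidableEq m]

def offDiagBlocks (P Q : Matrix m m R) : Matrix (Fin 2 × m) (Fin 2 × m) R :=
  single 0 1 1 ⊗ₖ P + single 1 0 1 ⊗ₖ Q

lemma trace_offDiagBlocks_mul_kronecker_one (P Q : Matrix m m R)
    (A B : Matrix (Fin 2) (Fin 2) R) :
    trace (offDiagBlocks P Q * (A ⊗ₖ 1 * offDiagBlocks P Q * B ⊗ₖ 1)) =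
      A 1 0 * B 1 0 * trace (P * P) + A 1 1 * B 0 0 * trace (P * Q) +
        A 0 0 * B 1 1 * trace (Q * P) + A 0 1 * B 0 1 * trace (Q * Q) := by
  simp only [offDiagBlocks, add_mul, mul_add, ← Matrix.mul_assoc, ← mul_kronecker_mul,
    Matrix.mul_one, trace_add, trace_kronecker]
  simp [trace, Fin.sum_univ_two, mul_apply, single]
  ring

lemma trace_sq_sub_trace_mul_conj_smul_one_add_smul (c k : R) (X V W : Matrix m m R)
    (hVW : V * W = 1) :
    trace ((c • 1 + k • X) * (c • 1 + k • X)) -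
        trace ((c • 1 + k • X) * (V * (c • 1 + k • X) * W)) =
      k ^ 2 * (trace (X * X) - trace (X * (V * X * W))) := by
  have hconj : V * (c • 1 + k • X) * W = c • 1 + k • (V * X * W) := by
    rw [Matrix.mul_add, Matrix.add_mul, Matrix.mul_smul, Matrix.smul_mul, Matrix.mul_one, hVW,
      Matrix.mul_smul, Matrix.smul_mul]
  have hcycle : trace (V * X * W) = trace X := by
    rw [trace_mul_cycle, mul_eq_one_comm.mp hVW, Matrix.one_mul]
  rw [hconj]
  simp only [Matrix.add_mul, Matrix.mul_add, trace_add, Matrix.smul_mul, Matrix.mul_smul,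
    trace_smul, Matrix.one_mul, Matrix.mul_one, hcycle, smul_eq_mul]
  ring

end OffDiagBlocks

lemma dqc1State_eq_smul_one_add (n : ℕ) (α : ℝ) (U : Matrix (Fin (2 ^ n)) (Fin (2 ^ n)) ℂ) :
    dqc1State n α U = ((2 : ℂ) ^ (n + 1))⁻¹ • 1 +
      (((2 : ℂ) ^ (n + 1))⁻¹ * α) • offDiagBlocks Uᴴ U := by
  ext ⟨i, k⟩ ⟨j, l⟩
  fin_cases i <;> fin_cases j <;>
    simp [dqc1State, offDiagBlocks, one_apply, single, Prod.ext_iff, mul_assoc]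

lemma ptraceB_dqc1State (n : ℕ) (α : ℝ) (U : Matrix (Fin (2 ^ n)) (Fin (2 ^ n)) ℂ) :
    ptraceB (dqc1State n α U) = (2 : ℂ)⁻¹ •
      !![1, (α : ℂ) * conj (U.trace / 2 ^ n); (α : ℂ) * (U.trace / 2 ^ n), 1] := by
  have htrace : ∑ k, U k k = U.trace := rfl
  ext i j
  fin_cases i <;> fin_cases j <;>
    simp [ptraceB, dqc1State, one_apply, ← Finset.mul_sum, ← map_sum, htrace, pow_succ,
      map_ofNat] <;>
    field_simp

section LnuRotation

variable {m : Type*} [Fintype m] [DecidableEq m]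

/-- The paper's `U_A`, with `w = e^{iχ}`, `c = cos θ`, `s = sin θ`. -/
def lnuRotation (w : ℂ) (c s : ℝ) : Matrix (Fin 2) (Fin 2) ℂ :=
  !![(c : ℂ), w * s; -(conj w * s), c]

lemma lnuRotation_mem_unitaryGroup {w : ℂ} (hw : ‖w‖ = 1) {c s : ℝ}
    (hcs : c ^ 2 + s ^ 2 = 1) : lnuRotation w c s ∈ unitaryGroup (Fin 2) ℂ := by
  have hcs' : (c : ℂ) ^ 2 + (s : ℂ) ^ 2 = 1 := by exact_mod_cast hcs
  have hw' : conj w * w = 1 := by simp [Complex.conj_mul', hw]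
  rw [mem_unitaryGroup_iff, star_eq_conjTranspose]
  ext i j
  fin_cases i <;> fin_cases j <;>
    simp [lnuRotation, mul_apply, Fin.sum_univ_two, Complex.conj_ofReal] <;>
    grind

lemma commute_lnuRotation {w x y : ℂ} (h : w * y = -(x * conj w)) (c s : ℝ) :
    Commute (lnuRotation w c s) !![1, x; y, 1] := by
  ext i j
  fin_cases i <;> fin_cases j <;>
    simp [lnuRotation, mul_apply, Fin.sum_univ_two] <;>
    grind

lemma trace_offDiagBlocks_sq_sub_lnuRotation_conj {U : Matrix m m ℂ}
    (hU : U ∈ unitaryGroup m ℂ) (w : ℂ) {c s : ℝ}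
    (hcs : c ^ 2 + s ^ 2 = 1) :
    trace (offDiagBlocks Uᴴ U * offDiagBlocks Uᴴ U) -
        trace (offDiagBlocks Uᴴ U * (lnuRotation w c s ⊗ₖ 1 * offDiagBlocks Uᴴ U *
          (lnuRotation w c s ⊗ₖ 1)ᴴ)) =
      ((2 * s ^ 2 * (Fintype.card m + (w ^ 2 * trace (U * U)).re) : ℝ) : ℂ) := by
  have hcs' : (c : ℂ) ^ 2 + (s : ℂ) ^ 2 = 1 := by exact_mod_cast hcs
  have hUU : Uᴴ * U = 1 := mem_unitaryGroup_iff'.mp hU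
  have hUU' : U * Uᴴ = 1 := mem_unitaryGroup_iff.mp hU
  have htrace : trace (Uᴴ * Uᴴ) = conj (trace (U * U)) := by
    rw [← conjTranspose_mul, trace_conjTranspose]; rfl
  have hsq := trace_offDiagBlocks_mul_kronecker_one Uᴴ U 1 1
  have hrot := trace_offDiagBlocks_mul_kronecker_one Uᴴ U (lnuRotation w c s)
    (lnuRotation w c s)ᴴ
  rw [one_kronecker_one, Matrix.one_mul, Matrix.mul_one] at hsq
  rw [conjTranspose_kronecker, conjTranspose_one, hsq, hrot]
  push_cast [Complex.re_eq_add_conj, map_mul, map_pow]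
  simp [lnuRotation, hUU, hUU', htrace, Complex.conj_ofReal]
  linear_combination -2 * (Fintype.card m : ℂ) * hcs'

end LnuRotation

theorem dqc1_lnu_shift_general (n : ℕ) (α : ℝ)
    (U : Matrix (Fin (2 ^ n)) (Fin (2 ^ n)) ℂ)
    (hU : U ∈ Matrix.unitaryGroup (Fin (2 ^ n)) ℂ)
    (τ : ℂ) (hτ : τ = U.trace / 2 ^ n) (hτne : τ ≠ 0)
    (θ χ : ℝ) (hχ : χ = Real.pi / 2 - Complex.arg τ)
    (UA : Matrix (Fin 2) (Fin 2) ℂ)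
    (hUA : UA = !![(Real.cos θ : ℂ), Complex.exp (χ * Complex.I) * Real.sin θ;
                   -(Complex.exp (-(χ * Complex.I)) * Real.sin θ), (Real.cos θ : ℂ)])
    (ρf : Matrix (Fin 2 × Fin (2 ^ n)) (Fin 2 × Fin (2 ^ n)) ℂ)
    (hρf : ρf = (UA ⊗ₖ (1 : Matrix (Fin (2 ^ n)) (Fin (2 ^ n)) ℂ)) * dqc1State n α U *
      (UA ⊗ₖ (1 : Matrix (Fin (2 ^ n)) (Fin (2 ^ n)) ℂ))ᴴ) :
    ptraceB (dqc1State n α U) =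
        (2 : ℂ)⁻¹ • !![1, (α : ℂ) * (starRingEnd ℂ) τ; (α : ℂ) * τ, 1] ∧
      UA * ptraceB (dqc1State n α U) = ptraceB (dqc1State n α U) * UA ∧
      (dqc1State n α U * dqc1State n α U).trace - (dqc1State n α U * ρf).trace =
        (((α ^ 2 * Real.sin θ ^ 2 / 2 ^ (n + 1)) *
          (1 - ((((starRingEnd ℂ) τ / (‖τ‖ : ℂ)) ^ 2 * (U * U).trace).re) / 2 ^ n)
          : ℝ) : ℂ) := by
  subst hχ
  have hw := Complex.exp_pi_div_two_sub_arg_mul_I hτne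
  set w := Complex.exp (((Real.pi / 2 - Complex.arg τ : ℝ) : ℂ) * Complex.I)
  have hUA' : UA = lnuRotation w (Real.cos θ) (Real.sin θ) := by
    rw [hUA, Complex.exp_neg_ofReal_mul_I]; rfl
  have hpt : ptraceB (dqc1State n α U) =
      (2 : ℂ)⁻¹ • !![1, (α : ℂ) * conj τ; (α : ℂ) * τ, 1] :=
    hτ ▸ ptraceB_dqc1State n α U
  have hV : UA ⊗ₖ (1 : Matrix (Fin (2 ^ n)) (Fin (2 ^ n)) ℂ) * (UA ⊗ₖ 1)ᴴ = 1 :=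
    mem_unitaryGroup_iff.mp <| kronecker_mem_unitary
      (hUA' ▸ lnuRotation_mem_unitaryGroup (Complex.norm_exp_ofReal_mul_I _)
        (Real.cos_sq_add_sin_sq θ)) (one_mem _)
  refine ⟨hpt, ?_, ?_⟩
  · rw [hpt, hUA']
    refine (commute_lnuRotation ?_ _ _).smul_right _
    rw [hw]
    simp [map_div₀, Complex.conj_ofReal]
    ring
  have hre : (w ^ 2 * trace (U * U)).re = -((conj τ / ‖τ‖) ^ 2 * trace (U * U)).re := by
    rw [hw, mul_pow, Complex.I_sq, neg_one_mul, neg_mul, Complex.neg_re]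
  rw [hρf, dqc1State_eq_smul_one_add,
    trace_sq_sub_trace_mul_conj_smul_one_add_smul _ _ _ _ _ hV, hUA',
    trace_offDiagBlocks_sq_sub_lnuRotation_conj hU _ (Real.cos_sq_add_sin_sq θ), hre,
    Fintype.card_fin]
  push_cast
  field_simp
  ring

/-- With χ = π/2 − arg τ, the unitary U_A = [[cosθ, e^{iχ}sinθ],[−e^{−iχ}sinθ, cosθ]]
commutes with the reduced control-qubit state ½[[1, α·conj τ],[ατ, 1]] of the DQC1 state,
and the LNU shift it induces is
Tr(ρ²) − Tr(ρρ_f) = (α²sin²θ/2^{n+1})(1 − Re((conj τ/|τ|)²·Tr(U²))/2ⁿ). -/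
theorem dqc1_lnu_shift (n : ℕ) (hn : 1 ≤ n) (α : ℝ) (hα0 : 0 < α) (hα1 : α ≤ 1)
    (U : Matrix (Fin (2 ^ n)) (Fin (2 ^ n)) ℂ)
    (hU : U ∈ Matrix.unitaryGroup (Fin (2 ^ n)) ℂ)
    (τ : ℂ) (hτ : τ = U.trace / 2 ^ n) (hτne : τ ≠ 0)
    (θ χ : ℝ) (hχ : χ = Real.pi / 2 - Complex.arg τ)
    (UA : Matrix (Fin 2) (Fin 2) ℂ)
    (hUA : UA = !![(Real.cos θ : ℂ), Complex.exp (χ * Complex.I) * Real.sin θ;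
                   -(Complex.exp (-(χ * Complex.I)) * Real.sin θ), (Real.cos θ : ℂ)])
    (ρf : Matrix (Fin 2 × Fin (2 ^ n)) (Fin 2 × Fin (2 ^ n)) ℂ)
    (hρf : ρf = (UA ⊗ₖ (1 : Matrix (Fin (2 ^ n)) (Fin (2 ^ n)) ℂ)) * dqc1State n α U *
      (UA ⊗ₖ (1 : Matrix (Fin (2 ^ n)) (Fin (2 ^ n)) ℂ))ᴴ) :
    ptraceB (dqc1State n α U) =
        (2 : ℂ)⁻¹ • !![1, (α : ℂ) * (starRingEnd ℂ) τ; (α : ℂ) * τ, 1] ∧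
      UA * ptraceB (dqc1State n α U) = ptraceB (dqc1State n α U) * UA ∧
      (dqc1State n α U * dqc1State n α U).trace - (dqc1State n α U * ρf).trace =
        (((α ^ 2 * Real.sin θ ^ 2 / 2 ^ (n + 1)) *
          (1 - ((((starRingEnd ℂ) τ / (‖τ‖ : ℂ)) ^ 2 * (U * U).trace).re) / 2 ^ n)
          : ℝ) : ℂ) :=
  dqc1_lnu_shift_general n α U hU τ hτ hτne θ χ hχ UA hUA ρf hρf
end

section
/- Let n ≥ 1, let U be a 2^n × 2^n unitary with entries u_{jk}, let α ∈ ℝ, let ρ_DQC1 = 2^{−(n+1)} · [[I_{2^n}, α U†],[α U, I_{2^n}]] on ℂ² ⊗ ℂ^{2^n}, and suppose τ = Tr(U)/2^n ≠ 0 with φ = arg(τ). Let Π_± = (1/2)[[1, ±e^{−iφ}],[±e^{iφ}, 1]] (the spectral projectors of the reduced control-qubit state when ατ ≠ 0) and let E_j be the 2^n × 2^n matrix with a 1 in entry (j,j) and zeros elsewhere. Then Σ_{s ∈ {+,−}} Σ_{j=1}^{2^n} (Π_s ⊗ E_j) ρ_DQC1 (Π_s ⊗ E_j) = 2^{−(n+1)}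 · [[I_{2^n}, α D],[α D†, I_{2^n}]], where D is the diagonal matrix with entries d_j = (conj(u_{jj}) + e^{−2iφ} u_{jj})/2. -/
open Matrix Kronecker

namespace Matrix

section KroneckerSingle

variable {R ι κ : Type*} [Fintype ι] [Fintype κ] [DecidableEq κ] [CommSemiring R]

theorem kronecker_single_mul_mul_kronecker_single_apply (P Q : Matrix ι ι R)
    (M : Matrix (ι × κ) (ι × κ) R) (j : κ) (a b : ι) (x y : κ) :
    ((P ⊗ₖ single j j (1 : R)) * M * (Q ⊗ₖ single j j (1 : R))) (a, x) (b, y) =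
      if j = x ∧ j = y then (P * blockDiag M j * Q) a b else 0 := by
  simp only [mul_apply, kroneckerMap_apply, Fintype.sum_prod_type, single_apply, blockDiag_apply]
  split_ifs with h
  · obtain ⟨rfl, rfl⟩ := h
    simp [Finset.sum_mul]
  · rcases not_and_or.mp h with h | h <;> simp [h]

theorem sum_kronecker_single_mul_mul_kronecker_single (P Q : Matrix ι ι R)
    (M : Matrix (ι × κ) (ι × κ) R) :
    ∑ j, (P ⊗ₖ single j j (1 : R)) * M * (Q ⊗ₖ single j j (1 : R)) =
      blockDiagonal fun x => P * blockDiag M x * Q := by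
  ext ⟨a, x⟩ ⟨b, y⟩
  simp only [sum_apply, kronecker_single_mul_mul_kronecker_single_apply, blockDiagonal_apply']
  rw [Finset.sum_eq_single x (fun j _ hj => if_neg fun h => hj h.1) (by simp)]
  exact if_congr (and_iff_right rfl) rfl rfl

end KroneckerSingle

section AntiDiagonal

theorem one_add_antidiag {R : Type*} [AddMonoidWithOne R] (e f : R) :
    1 + !![0, f; e, 0] = !![1, f; e, 1] := by
  rw [one_fin_two, of_add_of]
  simp

theorem one_sub_antidiag {R : Type*} [AddGroupWithOne R] (e f : R) :
    1 - !![0, f; e, 0] = !![1, -f; -e, 1] := by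
  rw [one_fin_two, of_sub_of]
  simp

theorem antidiag_mul_mul_antidiag {R : Type*} [CommSemiring R] (e f a b c d : R) :
    !![0, f; e, 0] * !![a, b; c, d] * !![0, f; e, 0] =
      !![f * d * e, f * c * f; e * b * e, e * a * f] := by
  rw [mul_fin_two, mul_fin_two]
  ring_nf

end AntiDiagonal

end Matrix

theorem inv_two_smul_sandwich_one_add_add_one_sub {K A : Type*} [Field K] [NeZero (2 : K)]
    [Ring A] [Algebra K A] (σ m : A) :
    ((2 : K)⁻¹ • (1 + σ)) * m * ((2 : K)⁻¹ • (1 + σ)) +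
      ((2 : K)⁻¹ • (1 - σ)) * m * ((2 : K)⁻¹ • (1 - σ)) = (2 : K)⁻¹ • (m + σ * m * σ) := by
  have h : (1 + σ) * m * (1 + σ) + (1 - σ) * m * (1 - σ) = (2 : K) • (m + σ * m * σ) := by
    rw [two_smul]
    noncomm_ring
  simp only [smul_mul_assoc, mul_smul_comm, smul_smul, ← smul_add, h]
  congr 1
  field_simp

theorem blockDiag_dqc1State (n : ℕ) (α : ℝ) (U : Matrix (Fin (2 ^ n)) (Fin (2 ^ n)) ℂ)
    (x : Fin (2 ^ n)) :
    (dqc1State n α U).blockDiag x =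
      !![((2 : ℂ) ^ (n + 1))⁻¹, ((2 : ℂ) ^ (n + 1))⁻¹ * (α * star (U x x));
        ((2 : ℂ) ^ (n + 1))⁻¹ * (α * U x x), ((2 : ℂ) ^ (n + 1))⁻¹] := by
  ext r s
  fin_cases r <;> fin_cases s <;> simp [blockDiag_apply, dqc1State]

theorem dqc1_dephased_state_general (n : ℕ) (α : ℝ)
    (U : Matrix (Fin (2 ^ n)) (Fin (2 ^ n)) ℂ)
    (φ : ℝ)
    (Pp Pm : Matrix (Fin 2) (Fin 2) ℂ)
    (hPp : Pp = (2 : ℂ)⁻¹ • !![1, Complex.exp (-(φ * Complex.I));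
                               Complex.exp (φ * Complex.I), 1])
    (hPm : Pm = (2 : ℂ)⁻¹ • !![1, -Complex.exp (-(φ * Complex.I));
                               -Complex.exp (φ * Complex.I), 1])
    (D : Matrix (Fin (2 ^ n)) (Fin (2 ^ n)) ℂ)
    (hD : D = Matrix.diagonal fun j =>
      ((starRingEnd ℂ) (U j j) + Complex.exp (-(2 * φ * Complex.I)) * U j j) / 2) :
    ∑ j : Fin (2 ^ n),
        ((Pp ⊗ₖ Matrix.single j j (1 : ℂ)) * dqc1State n α U *
            (Pp ⊗ₖ Matrix.single j j (1 : ℂ)) +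
          (Pm ⊗ₖ Matrix.single j j (1 : ℂ)) * dqc1State n α U *
            (Pm ⊗ₖ Matrix.single j j (1 : ℂ))) =
      Matrix.of fun p q =>
        ((2 : ℂ) ^ (n + 1))⁻¹ *
          (![![(1 : Matrix (Fin (2 ^ n)) (Fin (2 ^ n)) ℂ), (α : ℂ) • D],
             ![(α : ℂ) • Dᴴ, (1 : Matrix (Fin (2 ^ n)) (Fin (2 ^ n)) ℂ)]] p.1 q.1) p.2 q.2 := by
  set e := Complex.exp (φ * Complex.I)
  set f := Complex.exp (-(φ * Complex.I))
  have hef : e * f = 1 := by rw [← Complex.exp_add, add_neg_cancel, Complex.exp_zero]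
  have hff : Complex.exp (-(2 * φ * Complex.I)) = f * f := by
    rw [← Complex.exp_add]
    ring_nf
  have hfe : starRingEnd ℂ f = e := by
    rw [← Complex.exp_conj, map_neg, map_mul, Complex.conj_ofReal, Complex.conj_I, mul_neg,
      neg_neg]
  rw [Finset.sum_add_distrib, sum_kronecker_single_mul_mul_kronecker_single,
    sum_kronecker_single_mul_mul_kronecker_single, ← blockDiagonal_add]
  ext ⟨a, x⟩ ⟨b, y⟩
  rw [blockDiagonal_apply']
  rcases eq_or_ne x y with rfl | hxy
  · rw [if_pos rfl, Pi.add_apply, hPp, hPm, ← one_add_antidiag,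
      ← one_sub_antidiag, inv_two_smul_sandwich_one_add_add_one_sub, blockDiag_dqc1State,
      antidiag_mul_mul_antidiag]
    fin_cases a <;> fin_cases b <;> simp [hD, hff, hfe]
    · linear_combination (2 ^ (n + 1))⁻¹ / 2 * hef
    · ring
    · ring
    · linear_combination (2 ^ (n + 1))⁻¹ / 2 * hef
  · rw [if_neg hxy]
    fin_cases a <;> fin_cases b <;> simp [hD, hxy]

/-- Dephasing the DQC1 state in the eigenbases of its reduced states: with
Π_± = ½[[1, ±e^{−iφ}],[±e^{iφ}, 1]] (φ = arg τ, τ = Tr(U)/2ⁿ ≠ 0) and E_j the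
diagonal matrix units, Σ_{s,j} (Π_s ⊗ E_j) ρ (Π_s ⊗ E_j) = 2^{-(n+1)}[[I, αD],[αDᴴ, I]]
where D = diag(d_j), d_j = (conj(u_jj) + e^{−2iφ}u_jj)/2. -/
theorem dqc1_dephased_state (n : ℕ) (hn : 1 ≤ n) (α : ℝ)
    (U : Matrix (Fin (2 ^ n)) (Fin (2 ^ n)) ℂ)
    (hU : U ∈ Matrix.unitaryGroup (Fin (2 ^ n)) ℂ)
    (τ : ℂ) (hτ : τ = U.trace / 2 ^ n) (hτne : τ ≠ 0)
    (φ : ℝ) (hφ : φ = Complex.arg τ)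
    (Pp Pm : Matrix (Fin 2) (Fin 2) ℂ)
    (hPp : Pp = (2 : ℂ)⁻¹ • !![1, Complex.exp (-(φ * Complex.I));
                               Complex.exp (φ * Complex.I), 1])
    (hPm : Pm = (2 : ℂ)⁻¹ • !![1, -Complex.exp (-(φ * Complex.I));
                               -Complex.exp (φ * Complex.I), 1])
    (D : Matrix (Fin (2 ^ n)) (Fin (2 ^ n)) ℂ)
    (hD : D = Matrix.diagonal fun j =>
      ((starRingEnd ℂ) (U j j) + Complex.exp (-(2 * φ * Complex.I)) * U j j) / 2) :
    ∑ j : Fin (2 ^ n),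
        ((Pp ⊗ₖ Matrix.single j j (1 : ℂ)) * dqc1State n α U *
            (Pp ⊗ₖ Matrix.single j j (1 : ℂ)) +
          (Pm ⊗ₖ Matrix.single j j (1 : ℂ)) * dqc1State n α U *
            (Pm ⊗ₖ Matrix.single j j (1 : ℂ))) =
      Matrix.of fun p q =>
        ((2 : ℂ) ^ (n + 1))⁻¹ *
          (![![(1 : Matrix (Fin (2 ^ n)) (Fin (2 ^ n)) ℂ), (α : ℂ) • D],
             ![(α : ℂ) • Dᴴ, (1 : Matrix (Fin (2 ^ n)) (Fin (2 ^ n)) ℂ)]] p.1 q.1) p.2 q.2 :=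
  dqc1_dephased_state_general n α U φ Pp Pm hPp hPm D hD
end
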